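/- arXiv:2409.14257 — 7 statements merged into one kernel-verified Lean document; each statement's English description precedes it below -/
import Mathlib

section
/- Let G be a C_5^--free 3-graph on n ≥ 4 vertices. Then the number of 4-element subsets of V(G) that span at least 3 edges of G (equivalently, induce a subgraph isomorphic to K_4^- or to K_4) is at most binomial(n,3). In particular, every 3-element set of vertices of G has at most one vertex forming an edge of G with each of its three pairs. -/
open Finset

/-- A 3-uniform hypergraph: every edge has three vertices. -/
def ThreeGraph {α : Type*} (E : Finset (Finset α)) : Prop := ∀ e ∈ E, e.card = 3

/-- `G` contains a copy of `H`: an injection mapping edges of `H` to edges of `G`. -/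
def ContainsCopy {α β : Type*} (EH : Finset (Finset α)) (EG : Finset (Finset β)) : Prop :=
  ∃ f : α ↪ β, ∀ e ∈ EH, e.map f ∈ EG

/-- The `k`-th cyclic successor of `i` in `Fin ℓ`. -/
def rot (ℓ : ℕ) (i : Fin ℓ) (k : ℕ) : Fin ℓ := ⟨(i.val + k) % ℓ, Nat.mod_lt _ i.pos⟩

/-- The tight ℓ-cycle minus an edge `C_ℓ⁻`: edges `{i,i+1,i+2}` for `0 ≤ i ≤ ℓ-3`
together with `{ℓ-2,ℓ-1,0}`. -/
def cycM (ℓ : ℕ) : Finset (Finset (Fin ℓ)) :=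
  ((Finset.univ : Finset (Fin ℓ)).filter (fun i => i.val < ℓ - 1)).image
    (fun i => {i, rot ℓ i 1, rot ℓ i 2})

/-- The Turán number of `C_ℓ⁻`: maximum number of edges of a `C_ℓ⁻`-free 3-graph
on `n` vertices. -/
noncomputable def exCl (ℓ n : ℕ) : ℕ :=
  sSup {m | ∃ E : Finset (Finset (Fin n)), ThreeGraph E ∧ ¬ ContainsCopy (cycM ℓ) E ∧ E.card = m}


lemma pair_mem {n : ℕ} {s : Finset (Fin n)} {x y : Fin n} (hx : x ∈ s) (hy : y ∈ s)
    (hxy : x ≠ y) : ({x, y} : Finset (Fin n)) ∈ s.powersetCard 2 := by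
  rw [mem_powersetCard]
  refine ⟨?_, ?_⟩
  · intro z hz; simp at hz; rcases hz with h | h <;> subst h <;> assumption
  · rw [card_insert_of_notMem (by simp [hxy]), card_singleton]

lemma core {n : ℕ} {E : Finset (Finset (Fin n))} (h3 : ThreeGraph E)
    (hfree : ¬ ContainsCopy (cycM 5) E) {s : Finset (Fin n)} (hs : s.card = 3)
    {v w : Fin n} (hv : ∀ p ∈ s.powersetCard 2, insert v p ∈ E)
    (hw : ∀ p ∈ s.powersetCard 2, insert w p ∈ E) : v = w := by
  by_contra hvw
  obtain ⟨a, b, c, hab, hac, hbc, rfl⟩ := Finset.card_eq_three.mp hs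
  -- v, w are not in {a,b,c}
  have notin : ∀ u : Fin n, (∀ p ∈ ({a,b,c} : Finset (Fin n)).powersetCard 2, insert u p ∈ E)
      → u ∉ ({a,b,c} : Finset (Fin n)) := by
    intro u hu hus
    simp only [mem_insert, mem_singleton] at hus
    have key : ∀ x y : Fin n, x ∈ ({a,b,c} : Finset (Fin n)) → y ∈ ({a,b,c} : Finset (Fin n))
        → x ≠ y → u = x → False := by
      intro x y hx hy hxy hux
      have hp := hu {x, y} (pair_mem hx hy hxy)
      have hcard := h3 _ hp
      subst hux
      rw [Finset.insert_idem, card_insert_of_notMem (by simp [hxy]), card_singleton] at hcard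
      omega
    rcases hus with h | h | h
    · exact key a b (by simp) (by simp) hab h
    · exact key b a (by simp) (by simp) hab.symm h
    · exact key c a (by simp) (by simp) hac.symm h
  have hvs := notin v hv
  have hws := notin w hw
  simp only [mem_insert, mem_singleton, not_or] at hvs hws
  obtain ⟨hva, hvb, hvc⟩ := hvs
  obtain ⟨hwa, hwb, hwc⟩ := hws
  -- build the embedding 0↦a, 1↦v, 2↦b, 3↦c, 4↦w
  have hinj : Function.Injective (![a, v, b, c, w] : Fin 5 → Fin n) := by
    intro i j hij
    fin_cases i <;> fin_cases j <;>
      simp only [Matrix.cons_val_zero, Matrix.cons_val_one, Matrix.head_cons,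
        Matrix.cons_val_two, Matrix.tail_cons, Matrix.cons_val_three, Matrix.cons_val_four,
        Matrix.head_fin_const, Fin.isValue] at hij <;>
      first
        | rfl
        | exact absurd hij (by assumption)
        | exact absurd hij.symm (by assumption)
  apply hfree
  refine ⟨⟨![a, v, b, c, w], hinj⟩, ?_⟩
  intro e he
  have hc5 : cycM 5 = {{0,1,2},{1,2,3},{2,3,4},{0,3,4}} := by decide
  rw [hc5] at he
  have hmab : ({a, b} : Finset (Fin n)) ∈ ({a,b,c} : Finset (Fin n)).powersetCard 2 :=
    pair_mem (by simp) (by simp) hab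
  have hmac : ({a, c} : Finset (Fin n)) ∈ ({a,b,c} : Finset (Fin n)).powersetCard 2 :=
    pair_mem (by simp) (by simp) hac
  have hmbc : ({b, c} : Finset (Fin n)) ∈ ({a,b,c} : Finset (Fin n)).powersetCard 2 :=
    pair_mem (by simp) (by simp) hbc
  simp only [mem_insert, mem_singleton] at he
  rcases he with rfl | rfl | rfl | rfl
  · have h1 := hv _ hmab
    have heq : (({0,1,2} : Finset (Fin 5)).map ⟨![a, v, b, c, w], hinj⟩)
        = insert v {a, b} := by
      simp [Finset.map_insert, Finset.map_singleton]
      ext x; simp; tauto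
    rw [heq]; exact h1
  · have h1 := hv _ hmbc
    have heq : (({1,2,3} : Finset (Fin 5)).map ⟨![a, v, b, c, w], hinj⟩)
        = insert v {b, c} := by
      simp [Finset.map_insert, Finset.map_singleton]
    rw [heq]; exact h1
  · have h1 := hw _ hmbc
    have heq : (({2,3,4} : Finset (Fin 5)).map ⟨![a, v, b, c, w], hinj⟩)
        = insert w {b, c} := by
      simp [Finset.map_insert, Finset.map_singleton]
      ext x; simp; tauto
    rw [heq]; exact h1
  · have h1 := hw _ hmac
    have heq : (({0,3,4} : Finset (Fin 5)).map ⟨![a, v, b, c, w], hinj⟩)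
        = insert w {a, c} := by
      simp [Finset.map_insert, Finset.map_singleton]
      ext x; simp; tauto
    rw [heq]; exact h1

/-- In a `C₅⁻`-free 3-graph on `n ≥ 4` vertices, at most `C(n,3)` four-element
vertex sets span at least 3 edges; in particular every 3-set of vertices has at
most one vertex forming an edge with each of its three pairs. -/
theorem few_K4_minus_and_K4 (n : ℕ) (hn : 4 ≤ n) (E : Finset (Finset (Fin n)))
    (h3 : ThreeGraph E) (hfree : ¬ ContainsCopy (cycM 5) E) :
    (((Finset.univ : Finset (Fin n)).powersetCard 4).filter
        (fun S => 3 ≤ (E.filter (fun e => e ⊆ S)).card)).card ≤ n.choose 3 ∧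
    ∀ s : Finset (Fin n), s.card = 3 →
      ((Finset.univ : Finset (Fin n)).filter
        (fun v => ∀ p ∈ s.powersetCard 2, insert v p ∈ E)).card ≤ 1 := by
  constructor
  · -- part 1
    -- each good 4-set S has a vertex v forming edges with all pairs of S.erase v
    have key : ∀ S ∈ (((Finset.univ : Finset (Fin n)).powersetCard 4).filter
        (fun S => 3 ≤ (E.filter (fun e => e ⊆ S)).card)),
        ∃ v ∈ S, ∀ p ∈ (S.erase v).powersetCard 2, insert v p ∈ E := by
      intro S hS
      rw [mem_filter, mem_powersetCard] at hS
      obtain ⟨⟨-, hS4⟩, hSE⟩ := hS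
      set F := E.filter (fun e => e ⊆ S) with hF
      have hFsub : F ⊆ S.powersetCard 3 := by
        intro e he
        rw [mem_filter] at he
        exact mem_powersetCard.mpr ⟨he.2, h3 e he.1⟩
      have hP4 : (S.powersetCard 3).card = 4 := by
        rw [card_powersetCard, hS4]; rfl
      have hTcard : (S.powersetCard 3 \ F).card ≤ 1 := by
        rw [card_sdiff_of_subset hFsub, hP4]; omega
      -- find v avoiding all members of the deficient set
      have hvex : ∃ v ∈ S, ∀ t ∈ S.powersetCard 3 \ F, v ∉ t := by
        rcases (S.powersetCard 3 \ F).eq_empty_or_nonempty with hemp | ⟨t0, ht0⟩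
        · obtain ⟨v, hv⟩ := card_pos.mp (by omega : 0 < S.card)
          exact ⟨v, hv, by simp [hemp]⟩
        · have ht0S : t0 ⊆ S ∧ t0.card = 3 :=
            mem_powersetCard.mp (mem_sdiff.mp ht0).1
          have : 0 < (S \ t0).card := by
            rw [card_sdiff_of_subset ht0S.1, hS4, ht0S.2]; omega
          obtain ⟨v, hv⟩ := card_pos.mp this
          rw [mem_sdiff] at hv
          refine ⟨v, hv.1, ?_⟩
          intro t ht hvt
          have : t = t0 := card_le_one.mp hTcard t ht t0 ht0
          exact hv.2 (this ▸ hvt)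
      obtain ⟨v, hvS, hvavoid⟩ := hvex
      refine ⟨v, hvS, ?_⟩
      intro p hp
      rw [mem_powersetCard] at hp
      have hvp : v ∉ p := fun h => (mem_erase.mp (hp.1 h)).1 rfl
      have htP : insert v p ∈ S.powersetCard 3 := by
        rw [mem_powersetCard]
        constructor
        · intro x hx
          rcases mem_insert.mp hx with rfl | hx
          · exact hvS
          · exact (erase_subset _ _) (hp.1 hx)
        · rw [card_insert_of_notMem hvp, hp.2]
      by_contra hne
      have : insert v p ∈ S.powersetCard 3 \ F := by
        rw [mem_sdiff]
        exact ⟨htP, fun h => hne (mem_filter.mp h).1⟩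
      exact hvavoid _ this (mem_insert_self v p)
    -- build the injection S ↦ S.erase v
    classical
    have := Finset.card_le_card_of_injOn
      (f := fun S => if h : ∃ v ∈ S, ∀ p ∈ (S.erase v).powersetCard 2, insert v p ∈ E
        then S.erase h.choose else ∅)
      (s := (((Finset.univ : Finset (Fin n)).powersetCard 4).filter
        (fun S => 3 ≤ (E.filter (fun e => e ⊆ S)).card)))
      (t := (Finset.univ : Finset (Fin n)).powersetCard 3) ?_ ?_
    · calc _ ≤ ((Finset.univ : Finset (Fin n)).powersetCard 3).card := this
        _ = n.choose 3 := by rw [card_powersetCard, card_univ, Fintype.card_fin]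
    · intro S hS
      have hex := key S hS
      beta_reduce
      rw [dif_pos hex]
      have hvS := hex.choose_spec.1
      rw [mem_coe, mem_filter, mem_powersetCard] at hS
      rw [mem_coe, mem_powersetCard]
      exact ⟨subset_univ _, by rw [card_erase_of_mem hvS, hS.1.2]⟩
    · intro S hS S' hS' heq
      have hex := key S hS
      have hex' := key S' hS'
      beta_reduce at heq
      rw [dif_pos hex, dif_pos hex'] at heq
      set v := hex.choose with hvdef
      set v' := hex'.choose with hv'def
      have hvS := hex.choose_spec.1
      have hvP := hex.choose_spec.2
      have hv'S := hex'.choose_spec.1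
      have hv'P := hex'.choose_spec.2
      have hScard : S.card = 4 := (mem_powersetCard.mp (mem_filter.mp hS).1).2
      have hs3 : (S.erase v).card = 3 := by rw [card_erase_of_mem hvS, hScard]
      have hvv' : v = v' := by
        apply core h3 hfree hs3 hvP
        rw [heq]; exact hv'P
      have h1 : S = insert v (S.erase v) := (insert_erase hvS).symm
      have h2 : S' = insert v' (S'.erase v') := (insert_erase hv'S).symm
      rw [h1, h2, heq, hvv']
  · -- part 2
    intro s hs
    rw [card_le_one]
    intro v hv w hw
    rw [mem_filter] at hv hw
    exact core h3 hfree hs hv.2 hw.2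
end

section
/- Let G be a 3-graph on n vertices containing no copy of C_5^- and no copy of K_4^-, having the maximum number of edges among all such 3-graphs on n vertices. Then Δ(G) − δ(G) < n. -/
open Finset

def K4m : Finset (Finset (Fin 4)) := {{0,1,2},{0,1,3},{0,2,3}}

def deg {n : ℕ} (E : Finset (Finset (Fin n))) (v : Fin n) : ℕ :=
  (E.filter (fun e => v ∈ e)).card

/-! ### Auxiliary lemmas -/

lemma erase1 {α : Type*} [DecidableEq α] {v x y : α} (hx : v ≠ x) (hy : v ≠ y) :
    ({v, x, y} : Finset α).erase v = {x, y} :=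
  Finset.erase_insert (by simp [hx, hy])

lemma erase2 {α : Type*} [DecidableEq α] {v x y : α} (hx : v ≠ x) (hy : v ≠ y) :
    ({x, v, y} : Finset α).erase v = {x, y} := by
  ext z
  simp only [Finset.mem_erase, Finset.mem_insert, Finset.mem_singleton]
  constructor
  · rintro ⟨hz, rfl | rfl | rfl⟩
    · exact Or.inl rfl
    · exact absurd rfl hz
    · exact Or.inr rfl
  · rintro (rfl | rfl)
    · exact ⟨Ne.symm hx, Or.inl rfl⟩
    · exact ⟨Ne.symm hy, Or.inr (Or.inr rfl)⟩

lemma erase3 {α : Type*} [DecidableEq α] {v x y : α} (hx : v ≠ x) (hy : v ≠ y) :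
    ({x, y, v} : Finset α).erase v = {x, y} := by
  rw [show ({x, y, v} : Finset α) = {v, x, y} by ext z; simp; tauto]
  exact erase1 hx hy

/-- Building a copy of `K4m` from three explicit edges sharing an apex. -/
lemma k4copy {n : ℕ} {E : Finset (Finset (Fin n))} {u a b c : Fin n}
    (hua : u ≠ a) (hub : u ≠ b) (huc : u ≠ c) (hab : a ≠ b) (hac : a ≠ c) (hbc : b ≠ c)
    (h1 : ({u, a, b} : Finset (Fin n)) ∈ E) (h2 : ({u, a, c} : Finset (Fin n)) ∈ E)
    (h3 : ({u, b, c} : Finset (Fin n)) ∈ E) : ContainsCopy K4m E := by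
  refine ⟨⟨![u, a, b, c], ?_⟩, ?_⟩
  · intro i j hij; fin_cases i <;> fin_cases j <;> simp_all
  · intro e he
    have he' : e = {0,1,2} ∨ e = {0,1,3} ∨ e = {0,2,3} := by
      simpa [K4m] using he
    rcases he' with rfl | rfl | rfl <;>
      simp only [Finset.map_insert, Finset.map_singleton]
    exacts [h1, h2, h3]

/-- Replacing `v` by `u` in a copy avoiding `u`. -/
lemma swap_copy {n k : ℕ} {E' E : Finset (Finset (Fin n))} {u v : Fin n}
    (key1 : ∀ e' ∈ E', v ∉ e' → e' ∈ E)
    (key2 : ∀ e' ∈ E', v ∈ e' → insert u (e'.erase v) ∈ E)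
    (f : Fin k ↪ Fin n) (x0 : Fin k) (hv : f x0 = v) (hu : ∀ x, f x ≠ u)
    (EH : Finset (Finset (Fin k))) (hf : ∀ e ∈ EH, e.map f ∈ E') :
    ∃ g : Fin k ↪ Fin n, ∀ e ∈ EH, e.map g ∈ E := by
  have hginj : Function.Injective (fun x => if x = x0 then u else f x) := by
    intro a b hab
    dsimp only at hab
    by_cases ha : a = x0
    · by_cases hb : b = x0
      · rw [ha, hb]
      · rw [if_pos ha, if_neg hb] at hab
        exact absurd hab.symm (hu b)
    · by_cases hb : b = x0
      · rw [if_neg ha, if_pos hb] at hab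
        exact absurd hab (hu a)
      · rw [if_neg ha, if_neg hb] at hab
        exact f.injective hab
  refine ⟨⟨_, hginj⟩, ?_⟩
  intro e he
  by_cases hx : x0 ∈ e
  · have hmap : e.map ⟨_, hginj⟩ = insert u ((e.map f).erase v) := by
      ext y
      simp only [Finset.mem_map, Function.Embedding.coeFn_mk, mem_insert, mem_erase]
      constructor
      · rintro ⟨x, hxe, rfl⟩
        by_cases h : x = x0
        · left; simp [h]
        · right
          refine ⟨?_, ⟨x, hxe, ?_⟩⟩
          · simp only [if_neg h]
            rw [← hv]
            exact fun hc => h (f.injective hc)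
          · simp [h]
      · rintro (rfl | ⟨hyv, x, hxe, rfl⟩)
        · exact ⟨x0, hx, by simp⟩
        · have hxx0 : x ≠ x0 := fun h => hyv (h ▸ hv)
          exact ⟨x, hxe, by simp [hxx0]⟩
    rw [hmap]
    refine key2 _ (hf e he) ?_
    exact Finset.mem_map.2 ⟨x0, hx, hv⟩
  · have hmap : e.map ⟨_, hginj⟩ = e.map f := by
      rw [Finset.map_eq_image, Finset.map_eq_image]
      apply Finset.image_congr
      intro x hxe
      simp only [Function.Embedding.coeFn_mk]
      rw [if_neg (fun h : x = x0 => hx (h ▸ hxe))]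
    rw [hmap]
    refine key1 _ (hf e he) ?_
    intro hvm
    obtain ⟨x, hxe, hfx⟩ := Finset.mem_map.1 hvm
    exact hx ((f.injective (hfx.trans hv.symm)) ▸ hxe)

/-- In a maximum-size `{C₅⁻, K₄⁻}`-free 3-graph on `n` vertices,
`Δ(G) − δ(G) < n`. -/
theorem degree_spread_extremal (n : ℕ) (E : Finset (Finset (Fin n)))
    (h3 : ThreeGraph E) (hC5 : ¬ ContainsCopy (cycM 5) E) (hK4 : ¬ ContainsCopy K4m E)
    (hmax : ∀ E' : Finset (Finset (Fin n)), ThreeGraph E' → ¬ ContainsCopy (cycM 5) E' →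
      ¬ ContainsCopy K4m E' → E'.card ≤ E.card) :
    ∀ u v : Fin n, (deg E u : ℤ) - (deg E v : ℤ) < n := by
  intro u v
  by_contra hlt
  push_neg at hlt
  have hn : 0 < n := u.pos
  have hge : deg E v + n ≤ deg E u := by omega
  have hne : u ≠ v := by
    intro h; subst h; omega
  -- the modified hypergraph: delete all edges at v, clone the edges at u to v
  set S : Finset (Finset (Fin n)) := E.filter (fun e => u ∈ e ∧ v ∉ e) with hS_def
  set A : Finset (Finset (Fin n)) := E.filter (fun e => v ∉ e) with hA_def
  set B : Finset (Finset (Fin n)) := S.image (fun e => insert v (e.erase u)) with hB_def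
  set E' : Finset (Finset (Fin n)) := A ∪ B with hE'_def
  -- basic facts about members of B
  have hBfact : ∀ e' ∈ B, v ∈ e' ∧ u ∉ e' ∧ insert u (e'.erase v) ∈ E ∧ e'.card = 3 := by
    intro e' he'
    obtain ⟨e, he, rfl⟩ := Finset.mem_image.1 he'
    rw [hS_def, Finset.mem_filter] at he
    obtain ⟨heE, hue, hve⟩ := he
    have hveu : v ∉ e.erase u := fun h => hve (Finset.mem_of_mem_erase h)
    have her : (insert v (e.erase u)).erase v = e.erase u := Finset.erase_insert hveu
    refine ⟨Finset.mem_insert_self _ _, ?_, ?_, ?_⟩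
    · intro h
      rcases Finset.mem_insert.1 h with h | h
      · exact hne h
      · exact Finset.notMem_erase u e h
    · rw [her, Finset.insert_erase hue]; exact heE
    · rw [Finset.card_insert_of_notMem hveu, Finset.card_erase_of_mem hue, h3 e heE]
  have key1 : ∀ e' ∈ E', v ∉ e' → e' ∈ E := by
    intro e' he' hv'
    rcases Finset.mem_union.1 he' with h | h
    · exact (Finset.mem_filter.1 h).1
    · exact absurd (hBfact e' h).1 hv'
  have key2 : ∀ e' ∈ E', v ∈ e' → insert u (e'.erase v) ∈ E := by
    intro e' he' hv'
    rcases Finset.mem_union.1 he' with h | h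
    · exact absurd hv' (Finset.mem_filter.1 h).2
    · exact (hBfact e' h).2.2.1
  have keyuv : ∀ e' ∈ E', v ∈ e' → u ∉ e' := by
    intro e' he' hv'
    rcases Finset.mem_union.1 he' with h | h
    · exact absurd hv' (Finset.mem_filter.1 h).2
    · exact (hBfact e' h).2.1
  -- E' is a 3-graph
  have tg : ThreeGraph E' := by
    intro e' he'
    rcases Finset.mem_union.1 he' with h | h
    · exact h3 _ (Finset.mem_filter.1 h).1
    · exact (hBfact e' h).2.2.2
  -- E' is K4m-free
  have hK4' : ¬ ContainsCopy K4m E' := by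
    rintro ⟨f, hf⟩
    by_cases hvr : ∃ x, f x = v
    · obtain ⟨x0, hx0⟩ := hvr
      have hu : ∀ x, f x ≠ u := by
        intro x hx
        have hxx0 : x ≠ x0 := fun h => hne (by rw [← hx, h, hx0])
        obtain ⟨e, he, hxe, hx0e⟩ :=
          (by decide : ∀ a b : Fin 4, a ≠ b → ∃ e ∈ K4m, a ∈ e ∧ b ∈ e) x x0 hxx0
        exact keyuv _ (hf e he) (Finset.mem_map.2 ⟨x0, hx0e, hx0⟩)
          (Finset.mem_map.2 ⟨x, hxe, hx⟩)
      obtain ⟨g, hg⟩ := swap_copy key1 key2 f x0 hx0 hu K4m hf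
      exact hK4 ⟨g, hg⟩
    · push_neg at hvr
      refine hK4 ⟨f, fun e he => key1 _ (hf e he) ?_⟩
      intro hvm
      obtain ⟨x, _, hfx⟩ := Finset.mem_map.1 hvm
      exact hvr x hfx
  -- E' is C5m-free
  have hC5' : ¬ ContainsCopy (cycM 5) E' := by
    rintro ⟨f, hf⟩
    by_cases hvr : ∃ x, f x = v
    · obtain ⟨x0, hx0⟩ := hvr
      by_cases hur : ∃ x, f x = u
      · obtain ⟨x1, hx1⟩ := hur
        have hxx0 : x1 ≠ x0 := fun h => hne (by rw [← hx1, h, hx0])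
        have hpair : ∀ e ∈ cycM 5, ¬(x1 ∈ e ∧ x0 ∈ e) := by
          rintro e he ⟨h1, h0⟩
          exact keyuv _ (hf e he) (Finset.mem_map.2 ⟨x0, h0, hx0⟩)
            (Finset.mem_map.2 ⟨x1, h1, hx1⟩)
        have hcases := (by decide : ∀ a b : Fin 5, a ≠ b →
          (∀ e ∈ cycM 5, ¬(a ∈ e ∧ b ∈ e)) → (a = 1 ∧ b = 4) ∨ (a = 4 ∧ b = 1))
          x1 x0 hxx0 hpair
        -- distinctness facts
        have hinj : ∀ i j : Fin 5, i ≠ j → f i ≠ f j := fun i j h hc => h (f.injective hc)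
        have hab : f 0 ≠ f 2 := hinj _ _ (by decide)
        have hac : f 0 ≠ f 3 := hinj _ _ (by decide)
        have hbc : f 2 ≠ f 3 := hinj _ _ (by decide)
        rcases hcases with ⟨h1, h0⟩ | ⟨h1, h0⟩
        · -- u = f 1, v = f 4
          rw [h1] at hx1; rw [h0] at hx0
          have hva : v ≠ f 0 := by rw [← hx0]; exact hinj _ _ (by decide)
          have hvb : v ≠ f 2 := by rw [← hx0]; exact hinj _ _ (by decide)
          have hvc : v ≠ f 3 := by rw [← hx0]; exact hinj _ _ (by decide)
          have hua : u ≠ f 0 := by rw [← hx1]; exact hinj _ _ (by decide)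
          have hub : u ≠ f 2 := by rw [← hx1]; exact hinj _ _ (by decide)
          have huc : u ≠ f 3 := by rw [← hx1]; exact hinj _ _ (by decide)
          -- edge {2,3,4} ↦ {f2, f3, v} gives {u, f2, f3} ∈ E
          have m1 : ({2,3,4} : Finset (Fin 5)).map f ∈ E' := hf _ (by decide)
          have e1 : ({2,3,4} : Finset (Fin 5)).map f = {f 2, f 3, v} := by
            simp [Finset.map_insert, Finset.map_singleton, hx0]
          rw [e1] at m1
          have E1 : ({u, f 2, f 3} : Finset (Fin n)) ∈ E := by
            have := key2 _ m1 (by simp)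
            rwa [erase3 hvb hvc] at this
          -- edge {3,4,0} ↦ {f3, v, f0} gives {u, f 0, f 3} ∈ E
          have m2 : ({3,4,0} : Finset (Fin 5)).map f ∈ E' := hf _ (by decide)
          have e2 : ({3,4,0} : Finset (Fin 5)).map f = {f 3, v, f 0} := by
            simp [Finset.map_insert, Finset.map_singleton, hx0]
          rw [e2] at m2
          have E2 : ({u, f 0, f 3} : Finset (Fin n)) ∈ E := by
            have := key2 _ m2 (by simp)
            rw [erase2 hvc hva] at this
            rwa [show ({u, f 3, f 0} : Finset (Fin n)) = {u, f 0, f 3} by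
              ext z; simp; tauto] at this
          -- edge {0,1,2} ↦ {f0, u, f2} ∈ E directly
          have m3 : ({0,1,2} : Finset (Fin 5)).map f ∈ E' := hf _ (by decide)
          have e3 : ({0,1,2} : Finset (Fin 5)).map f = {f 0, u, f 2} := by
            simp [Finset.map_insert, Finset.map_singleton, hx1]
          rw [e3] at m3
          have E3 : ({u, f 0, f 2} : Finset (Fin n)) ∈ E := by
            have := key1 _ m3 (by
              simp only [Finset.mem_insert, Finset.mem_singleton]
              push_neg
              exact ⟨hva, hne.symm, hvb⟩)
            rwa [show ({f 0, u, f 2} : Finset (Fin n)) = {u, f 0, f 2} by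
              ext z; simp; tauto] at this
          exact hK4 (k4copy hua hub huc hab hac hbc E3 E2 E1)
        · -- u = f 4, v = f 1
          rw [h1] at hx1; rw [h0] at hx0
          have hva : v ≠ f 0 := by rw [← hx0]; exact hinj _ _ (by decide)
          have hvb : v ≠ f 2 := by rw [← hx0]; exact hinj _ _ (by decide)
          have hvc : v ≠ f 3 := by rw [← hx0]; exact hinj _ _ (by decide)
          have hua : u ≠ f 0 := by rw [← hx1]; exact hinj _ _ (by decide)
          have hub : u ≠ f 2 := by rw [← hx1]; exact hinj _ _ (by decide)
          have huc : u ≠ f 3 := by rw [← hx1]; exact hinj _ _ (by decide)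
          -- edge {0,1,2} ↦ {f0, v, f2} gives {u, f 0, f 2} ∈ E
          have m1 : ({0,1,2} : Finset (Fin 5)).map f ∈ E' := hf _ (by decide)
          have e1 : ({0,1,2} : Finset (Fin 5)).map f = {f 0, v, f 2} := by
            simp [Finset.map_insert, Finset.map_singleton, hx0]
          rw [e1] at m1
          have E1 : ({u, f 0, f 2} : Finset (Fin n)) ∈ E := by
            have := key2 _ m1 (by simp)
            rwa [erase2 hva hvb] at this
          -- edge {1,2,3} ↦ {v, f2, f3} gives {u, f 2, f 3} ∈ E
          have m2 : ({1,2,3} : Finset (Fin 5)).map f ∈ E' := hf _ (by decide)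
          have e2 : ({1,2,3} : Finset (Fin 5)).map f = {v, f 2, f 3} := by
            simp [Finset.map_insert, Finset.map_singleton, hx0]
          rw [e2] at m2
          have E2 : ({u, f 2, f 3} : Finset (Fin n)) ∈ E := by
            have := key2 _ m2 (by simp)
            rwa [erase1 hvb hvc] at this
          -- edge {3,4,0} ↦ {f3, u, f0} ∈ E directly
          have m3 : ({3,4,0} : Finset (Fin 5)).map f ∈ E' := hf _ (by decide)
          have e3 : ({3,4,0} : Finset (Fin 5)).map f = {f 3, u, f 0} := by
            simp [Finset.map_insert, Finset.map_singleton, hx1]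
          rw [e3] at m3
          have E3 : ({u, f 0, f 3} : Finset (Fin n)) ∈ E := by
            have := key1 _ m3 (by
              simp only [Finset.mem_insert, Finset.mem_singleton]
              push_neg
              exact ⟨hvc, hne.symm, hva⟩)
            rwa [show ({f 3, u, f 0} : Finset (Fin n)) = {u, f 0, f 3} by
              ext z; simp; tauto] at this
          exact hK4 (k4copy hua hub huc hab hac hbc E1 E3 E2)
      · push_neg at hur
        obtain ⟨g, hg⟩ := swap_copy key1 key2 f x0 hx0 hur (cycM 5) hf
        exact hC5 ⟨g, hg⟩
    · push_neg at hvr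
      refine hC5 ⟨f, fun e he => key1 _ (hf e he) ?_⟩
      intro hvm
      obtain ⟨x, _, hfx⟩ := Finset.mem_map.1 hvm
      exact hvr x hfx
  -- counting
  have hdisj : Disjoint A B := by
    rw [Finset.disjoint_left]
    intro e hA hB
    exact (Finset.mem_filter.1 hA).2 (hBfact e hB).1
  have hE'card : E'.card = A.card + B.card := Finset.card_union_of_disjoint hdisj
  have hAcard : (E.filter (fun e => v ∈ e)).card + A.card = E.card :=
    Finset.card_filter_add_card_filter_not (p := fun e => v ∈ e)
  have hdv : deg E v = (E.filter (fun e => v ∈ e)).card := rfl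
  have hBcard : B.card = S.card := by
    apply Finset.card_image_of_injOn
    intro e1 h1 e2 h2 heq
    rw [Finset.mem_coe, Finset.mem_filter] at h1 h2
    have hv1 : v ∉ e1.erase u := fun h => h1.2.2 (Finset.mem_of_mem_erase h)
    have hv2 : v ∉ e2.erase u := fun h => h2.2.2 (Finset.mem_of_mem_erase h)
    dsimp only at heq
    have : e1.erase u = e2.erase u := by
      rw [← Finset.erase_insert hv1, heq, Finset.erase_insert hv2]
    rw [← Finset.insert_erase h1.2.1, this, Finset.insert_erase h2.2.1]
  have hSsplit : (E.filter (fun e => u ∈ e ∧ v ∈ e)).card + S.card = deg E u := by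
    have := Finset.card_filter_add_card_filter_not
      (s := E.filter (fun e => u ∈ e)) (p := fun e => v ∈ e)
    rwa [Finset.filter_filter, Finset.filter_filter] at this
  have hduv : (E.filter (fun e => u ∈ e ∧ v ∈ e)).card < n := by
    have hle : (E.filter (fun e => u ∈ e ∧ v ∈ e)).card ≤
        ((Finset.univ.erase u).image (fun w => ({w} : Finset (Fin n)))).card := by
      apply Finset.card_le_card_of_injOn (fun e => (e.erase u).erase v)
      · intro e he
        rw [Finset.mem_coe, Finset.mem_filter] at he
        obtain ⟨heE, hue, hve⟩ := he
        have hc : ((e.erase u).erase v).card = 1 := by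
          rw [Finset.card_erase_of_mem (Finset.mem_erase.2 ⟨hne.symm, hve⟩),
            Finset.card_erase_of_mem hue, h3 e heE]
        obtain ⟨w, hw⟩ := Finset.card_eq_one.1 hc
        have hwm : w ∈ (e.erase u).erase v := hw ▸ Finset.mem_singleton_self w
        have hwu : w ≠ u := (Finset.mem_erase.1 (Finset.mem_of_mem_erase hwm)).1
        exact Finset.mem_image.2 ⟨w, Finset.mem_erase.2 ⟨hwu, Finset.mem_univ w⟩, hw.symm⟩
      · intro e1 h1 e2 h2 heq
        rw [Finset.mem_coe, Finset.mem_filter] at h1 h2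
        have r : ∀ e : Finset (Fin n), u ∈ e → v ∈ e →
            insert u (insert v ((e.erase u).erase v)) = e := by
          intro e hu hv
          rw [Finset.insert_erase (Finset.mem_erase.2 ⟨hne.symm, hv⟩), Finset.insert_erase hu]
        dsimp only at heq
        rw [← r e1 h1.2.1 h1.2.2, heq, r e2 h2.2.1 h2.2.2]
    have himg : ((Finset.univ.erase u).image (fun w => ({w} : Finset (Fin n)))).card = n - 1 := by
      rw [Finset.card_image_of_injective _ Finset.singleton_injective,
        Finset.card_erase_of_mem (Finset.mem_univ u), Finset.card_univ, Fintype.card_fin]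
    omega
  have hfin := hmax E' tg hC5' hK4'
  omega
end

section
/- Let x_1, x_2, x_3, t, f_2 be real numbers with x_1 ≥ x_2 ≥ x_3 ≥ 0, t ≥ 0, f_2 ≥ 0, and x_1 + x_2 + x_3 + t = 1, satisfying 6·x_1·x_2·x_3 − f_2 + 0.196·t + 0.366·t·(1 − t) ≥ 0.221119. Then: f_2 ≤ (2/9)·(1 − t)³ + 0.196·t + 0.366·(1 − t)·t − 0.221119, f_2 ≤ 0.001104, t ≤ 0.0109, x_3 ≥ 0.306, and x_1 ≤ 0.361. -/
set_option maxHeartbeats 1000000 in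
/-- Bounds on the part sizes from the main flag-algebra inequality. -/
theorem partition_bounds (x1 x2 x3 t f2 : ℝ)
    (h12 : x2 ≤ x1) (h23 : x3 ≤ x2) (h3 : 0 ≤ x3) (ht : 0 ≤ t) (hf : 0 ≤ f2)
    (hsum : x1 + x2 + x3 + t = 1)
    (hineq : 6 * x1 * x2 * x3 - f2 + 0.196 * t + 0.366 * t * (1 - t) ≥ 0.221119) :
    f2 ≤ (2/9) * (1 - t) ^ 3 + 0.196 * t + 0.366 * (1 - t) * t - 0.221119 ∧
    f2 ≤ 0.001104 ∧ t ≤ 0.0109 ∧ 0.306 ≤ x3 ∧ x1 ≤ 0.361 := by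
  have h2 : 0 ≤ x2 := le_trans h3 h23
  have h1 : 0 ≤ x1 := le_trans h2 h12
  have ht1 : t ≤ 1 := by linarith
  have hamgm : 6 * x1 * x2 * x3 ≤ (2/9) * (1 - t) ^ 3 := by
    have hs : 1 - t = x1 + x2 + x3 := by linarith
    rw [hs]
    nlinarith [sq_nonneg (x1 - x2), sq_nonneg (x2 - x3), sq_nonneg (x1 - x3),
      mul_nonneg (mul_nonneg h1 h2) h3,
      mul_nonneg h3 (sq_nonneg (x1 - x2)), mul_nonneg h1 (sq_nonneg (x2 - x3)),
      mul_nonneg h2 (sq_nonneg (x1 - x3))]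
  have P1 : f2 ≤ (2/9) * (1 - t) ^ 3 + 0.196 * t + 0.366 * (1 - t) * t - 0.221119 := by
    nlinarith [hamgm]
  have P3 : t ≤ 0.0109 := by
    by_contra h
    push_neg at h
    nlinarith [P1, hf, sq_nonneg (t - 0.6664),
      mul_nonneg (le_of_lt (by linarith : (0:ℝ) < t - 0.0109)) (sq_nonneg (t - 0.6664)),
      sq_nonneg (t - 0.0109)]
  have P2 : f2 ≤ 0.001104 := by
    nlinarith [P1, sq_nonneg (t - 0.6664), mul_nonneg ht (sq_nonneg (t - 0.6664)), ht, P3,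
      sq_nonneg t]
  refine ⟨P1, P2, P3, ?_, ?_⟩
  · by_contra h
    push_neg at h
    have hA : 6 * x1 * x2 * x3 ≤ 1.5 * x3 * (x1 + x2)^2 := by
      nlinarith [mul_nonneg h3 (sq_nonneg (x1 - x2))]
    have hbr : 0 ≤ (1 - t - 0.306 - x3)^2 - 0.306 * x3 := by
      nlinarith [sq_nonneg (1 - t - 0.306 - x3 - 0.3771)]
    have hmono : 1.5 * x3 * (x1 + x2)^2 ≤ 0.459 * (1 - t - 0.306)^2 := by
      rw [show x1 + x2 = 1 - t - x3 by linarith]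
      nlinarith [mul_nonneg (by linarith : (0:ℝ) ≤ 0.306 - x3) hbr]
    nlinarith [mul_nonneg ht (by linarith : (0:ℝ) ≤ 0.0109 - t)]
  · by_contra h
    push_neg at h
    have hA : 6 * x1 * x2 * x3 ≤ 1.5 * x1 * (x2 + x3)^2 := by
      nlinarith [mul_nonneg h1 (sq_nonneg (x2 - x3))]
    have hbr : (1 - t - x1 - 0.361)^2 - 0.361 * x1 ≤ 0 := by
      rw [show 1 - t - x1 - 0.361 = x2 + x3 - 0.361 by linarith]
      nlinarith [mul_nonneg (by linarith : (0:ℝ) ≤ x2 + x3)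
        (by linarith : (0:ℝ) ≤ 0.722 - (x2 + x3))]
    have hmono : 1.5 * x1 * (x2 + x3)^2 ≤ 0.5415 * (1 - t - 0.361)^2 := by
      rw [show x2 + x3 = 1 - t - x1 by linarith]
      nlinarith [mul_nonneg (by linarith : (0:ℝ) ≤ x1 - 0.361)
        (by linarith : (0:ℝ) ≤ 0.361 * x1 - (1 - t - x1 - 0.361)^2)]
    nlinarith [mul_nonneg ht (by linarith : (0:ℝ) ≤ 0.0109 - t)]
end

section
/- For every integer ℓ ≥ 7 not divisible by 3, there exists a positive integer t such that the blow-up C_5^-[t] contains a copy of C_ℓ^-. -/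
open Finset

/-- The balanced blow-up `H[t]`: each vertex is replaced by `t` copies; a triple is
an edge iff its first coordinates are three distinct vertices forming an edge of `H`. -/
def blowUp {k : ℕ} (EH : Finset (Finset (Fin k))) (t : ℕ) : Finset (Finset (Fin k × Fin t)) :=
  (((Finset.univ : Finset (Fin k × Fin t)).powersetCard 3).filter
    (fun e => (e.image Prod.fst).card = 3 ∧ e.image Prod.fst ∈ EH))


/-- Interior walk pattern for `ℓ ≡ 2 (mod 3)`: `0,1,2,3,1,2,3,...,1,2,3,4`. -/
def patA (ℓ n : ℕ) : Fin 5 :=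
  if n = 0 then 0 else if n = ℓ - 1 then 4
  else if n % 3 = 1 then 1 else if n % 3 = 2 then 2 else 3

/-- Interior walk pattern for `ℓ ≡ 1 (mod 3)`: `0,3,4,2,3,1,2,3,1,2,3,...,1,2`. -/
def patB (n : ℕ) : Fin 5 :=
  if n = 0 then 0 else if n = 1 then 3 else if n = 2 then 4
  else if n = 3 then 2 else if n = 4 then 3
  else if n % 3 = 2 then 1 else if n % 3 = 0 then 2 else 3

lemma patA_eval0 (ℓ : ℕ) : patA ℓ 0 = 0 := by simp [patA]
lemma patA_eval4 (ℓ n : ℕ) (h0 : n ≠ 0) (h : n = ℓ - 1) : patA ℓ n = 4 := by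
  subst h; simp [patA, h0]
lemma patA_eval1 (ℓ n : ℕ) (h0 : n ≠ 0) (h4 : n ≠ ℓ - 1) (h : n % 3 = 1) :
    patA ℓ n = 1 := by simp [patA, h0, h4, h]
lemma patA_eval2 (ℓ n : ℕ) (h0 : n ≠ 0) (h4 : n ≠ ℓ - 1) (h : n % 3 = 2) :
    patA ℓ n = 2 := by simp [patA, h0, h4, h]
lemma patA_eval3 (ℓ n : ℕ) (h0 : n ≠ 0) (h4 : n ≠ ℓ - 1) (h : n % 3 = 0) :
    patA ℓ n = 3 := by simp [patA, h0, h4, h]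

lemma patB_eval₀ : patB 0 = 0 := rfl
lemma patB_eval₁ : patB 1 = 3 := rfl
lemma patB_eval₂ : patB 2 = 4 := rfl
lemma patB_eval₃ : patB 3 = 2 := rfl
lemma patB_eval₄ : patB 4 = 3 := rfl
lemma patB_evalp1 (n : ℕ) (h5 : 5 ≤ n) (h : n % 3 = 2) : patB n = 1 := by
  have h0 : n ≠ 0 := by omega
  have h1 : n ≠ 1 := by omega
  have h2 : n ≠ 2 := by omega
  have h3 : n ≠ 3 := by omega
  have h4 : n ≠ 4 := by omega
  simp [patB, h0, h1, h2, h3, h4, h]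
lemma patB_evalp2 (n : ℕ) (h5 : 5 ≤ n) (h : n % 3 = 0) : patB n = 2 := by
  have h0 : n ≠ 0 := by omega
  have h1 : n ≠ 1 := by omega
  have h2 : n ≠ 2 := by omega
  have h3 : n ≠ 3 := by omega
  have h4 : n ≠ 4 := by omega
  have h' : n % 3 ≠ 2 := by omega
  simp [patB, h0, h1, h2, h3, h4, h, h']
lemma patB_evalp3 (n : ℕ) (h5 : 5 ≤ n) (h : n % 3 = 1) : patB n = 3 := by
  have h0 : n ≠ 0 := by omega
  have h1 : n ≠ 1 := by omega
  have h2 : n ≠ 2 := by omega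
  have h3 : n ≠ 3 := by omega
  have h4 : n ≠ 4 := by omega
  have h' : n % 3 ≠ 2 := by omega
  have h'' : n % 3 ≠ 0 := by omega
  simp [patB, h0, h1, h2, h3, h4, h, h', h'']

lemma c5_012 : ({0,1,2} : Finset (Fin 5)).card = 3 ∧ ({0,1,2} : Finset (Fin 5)) ∈ cycM 5 := by
  constructor <;> decide
lemma c5_123 : ({1,2,3} : Finset (Fin 5)).card = 3 ∧ ({1,2,3} : Finset (Fin 5)) ∈ cycM 5 := by
  constructor <;> decide
lemma c5_231 : ({2,3,1} : Finset (Fin 5)).card = 3 ∧ ({2,3,1} : Finset (Fin 5)) ∈ cycM 5 := by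
  constructor <;> decide
lemma c5_312 : ({3,1,2} : Finset (Fin 5)).card = 3 ∧ ({3,1,2} : Finset (Fin 5)) ∈ cycM 5 := by
  constructor <;> decide
lemma c5_234 : ({2,3,4} : Finset (Fin 5)).card = 3 ∧ ({2,3,4} : Finset (Fin 5)) ∈ cycM 5 := by
  constructor <;> decide
lemma c5_340 : ({3,4,0} : Finset (Fin 5)).card = 3 ∧ ({3,4,0} : Finset (Fin 5)) ∈ cycM 5 := by
  constructor <;> decide
lemma c5_034 : ({0,3,4} : Finset (Fin 5)).card = 3 ∧ ({0,3,4} : Finset (Fin 5)) ∈ cycM 5 := by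
  constructor <;> decide
lemma c5_342 : ({3,4,2} : Finset (Fin 5)).card = 3 ∧ ({3,4,2} : Finset (Fin 5)) ∈ cycM 5 := by
  constructor <;> decide
lemma c5_423 : ({4,2,3} : Finset (Fin 5)).card = 3 ∧ ({4,2,3} : Finset (Fin 5)) ∈ cycM 5 := by
  constructor <;> decide
lemma c5_120 : ({1,2,0} : Finset (Fin 5)).card = 3 ∧ ({1,2,0} : Finset (Fin 5)) ∈ cycM 5 := by
  constructor <;> decide

lemma mem_blowUp {k t : ℕ} {EH : Finset (Finset (Fin k))} {s : Finset (Fin k × Fin t)}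
    (h1 : s.card = 3) (h2 : (s.image Prod.fst).card = 3) (h3 : s.image Prod.fst ∈ EH) :
    s ∈ blowUp EH t := by
  simp only [blowUp, Finset.mem_filter, Finset.mem_powersetCard]
  exact ⟨⟨s.subset_univ, h1⟩, h2, h3⟩

/-- If `a : ℕ → Fin 5` is a tight walk in `C₅⁻` of the right cyclic shape,
then `C_ℓ⁻` embeds into the blow-up `C₅⁻[ℓ]`. -/
lemma contains_of_seq (ℓ : ℕ) (hℓ : 7 ≤ ℓ) (a : ℕ → Fin 5)
    (key1 : ∀ n, n + 3 ≤ ℓ →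
      ({a n, a (n+1), a (n+2)} : Finset (Fin 5)).card = 3 ∧
      ({a n, a (n+1), a (n+2)} : Finset (Fin 5)) ∈ cycM 5)
    (key2 : ({a (ℓ-2), a (ℓ-1), a 0} : Finset (Fin 5)).card = 3 ∧
      ({a (ℓ-2), a (ℓ-1), a 0} : Finset (Fin 5)) ∈ cycM 5) :
    ContainsCopy (cycM ℓ) (blowUp (cycM 5) ℓ) := by
  refine ⟨⟨fun i => (a i.val, i), fun x y h => congrArg Prod.snd h⟩, ?_⟩
  intro e he
  simp only [cycM, Finset.mem_image, Finset.mem_filter, Finset.mem_univ, true_and] at he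
  obtain ⟨i, hi, rfl⟩ := he
  set f : Fin ℓ ↪ Fin 5 × Fin ℓ := ⟨fun i => (a i.val, i), fun x y h => congrArg Prod.snd h⟩
  set e : Finset (Fin ℓ) := {i, rot ℓ i 1, rot ℓ i 2} with hedef
  have himg : (e.map f).image Prod.fst = e.image (fun x : Fin ℓ => a x.val) := by
    rw [Finset.map_eq_image, Finset.image_image]
    rfl
  have hval : e.image (fun x : Fin ℓ => a x.val)
      = {a i.val, a ((i.val+1) % ℓ), a ((i.val+2) % ℓ)} := by
    simp [hedef, Finset.image_insert, rot]
  have hilt : i.val < ℓ := i.isLt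
  have hkey : ({a i.val, a ((i.val+1) % ℓ), a ((i.val+2) % ℓ)} : Finset (Fin 5)).card = 3 ∧
      ({a i.val, a ((i.val+1) % ℓ), a ((i.val+2) % ℓ)} : Finset (Fin 5)) ∈ cycM 5 := by
    by_cases hc : i.val + 3 ≤ ℓ
    · have h1 : (i.val + 1) % ℓ = i.val + 1 := Nat.mod_eq_of_lt (by omega)
      have h2 : (i.val + 2) % ℓ = i.val + 2 := Nat.mod_eq_of_lt (by omega)
      rw [h1, h2]; exact key1 i.val hc
    · have hi2 : i.val = ℓ - 2 := by omega
      have h1 : (i.val + 1) % ℓ = ℓ - 1 := by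
        rw [hi2]; have : ℓ - 2 + 1 = ℓ - 1 := by omega
        rw [this]; exact Nat.mod_eq_of_lt (by omega)
      have h2 : (i.val + 2) % ℓ = 0 := by
        rw [hi2]; have : ℓ - 2 + 2 = ℓ := by omega
        rw [this]; exact Nat.mod_self ℓ
      rw [h1, h2, hi2]; exact key2
  have himgcard : ((e.map f).image Prod.fst).card = 3 := by
    rw [himg, hval]; exact hkey.1
  have hecard : e.card = 3 := by
    have hle : e.card ≤ 3 := by
      apply le_trans (Finset.card_insert_le _ _)
      have := Finset.card_insert_le (rot ℓ i 1) ({rot ℓ i 2} : Finset (Fin ℓ))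
      simp only [Finset.card_singleton] at this ⊢
      omega
    have hge : 3 ≤ e.card := by
      have h := Finset.card_image_le (s := e) (f := fun x : Fin ℓ => a x.val)
      rw [hval, hkey.1] at h
      exact h
    omega
  apply mem_blowUp
  · rw [Finset.card_map]; exact hecard
  · exact himgcard
  · rw [himg, hval]; exact hkey.2

/-- For every ℓ ≥ 7 not divisible by 3, some blow-up of C₅⁻ contains C_ℓ⁻. -/
theorem Cl_in_blowup_C5 (ℓ : ℕ) (hℓ : 7 ≤ ℓ) (h3 : ¬ 3 ∣ ℓ) :
    ∃ t : ℕ, 1 ≤ t ∧ ContainsCopy (cycM ℓ) (blowUp (cycM 5) t) := by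
  refine ⟨ℓ, by omega, ?_⟩
  have hr : ℓ % 3 = 1 ∨ ℓ % 3 = 2 := by omega
  rcases hr with hr | hr
  · -- ℓ ≡ 1 (mod 3), use patB : 0,3,4,2,3,1,2,3,1,2,3,...,1,2
    refine contains_of_seq ℓ hℓ patB ?_ ?_
    · intro n hn
      have hcase : n = 0 ∨ n = 1 ∨ n = 2 ∨ n = 3 ∨ n = 4 ∨ 5 ≤ n := by omega
      rcases hcase with rfl | rfl | rfl | rfl | rfl | h5
      · rw [patB_eval₀, patB_eval₁, patB_eval₂]; exact c5_034
      · rw [patB_eval₁, patB_eval₂, patB_eval₃]; exact c5_342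
      · rw [patB_eval₂, patB_eval₃, patB_eval₄]; exact c5_423
      · rw [patB_eval₃, patB_eval₄, patB_evalp1 5 (by omega) (by omega)]; exact c5_231
      · rw [patB_eval₄, patB_evalp1 5 (by omega) (by omega),
          patB_evalp2 6 (by omega) (by omega)]
        exact c5_312
      · have hm : n % 3 = 0 ∨ n % 3 = 1 ∨ n % 3 = 2 := by omega
        rcases hm with hm | hm | hm
        · rw [patB_evalp2 n h5 hm, patB_evalp3 (n+1) (by omega) (by omega),
            patB_evalp1 (n+2) (by omega) (by omega)]
          exact c5_231
        · rw [patB_evalp3 n h5 hm, patB_evalp1 (n+1) (by omega) (by omega),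
            patB_evalp2 (n+2) (by omega) (by omega)]
          exact c5_312
        · rw [patB_evalp1 n h5 hm, patB_evalp2 (n+1) (by omega) (by omega),
            patB_evalp3 (n+2) (by omega) (by omega)]
          exact c5_123
    · rw [patB_evalp1 (ℓ-2) (by omega) (by omega),
        patB_evalp2 (ℓ-1) (by omega) (by omega), patB_eval₀]
      exact c5_120
  · -- ℓ ≡ 2 (mod 3), use patA : 0,1,2,3,1,2,3,...,1,2,3,4
    refine contains_of_seq ℓ hℓ (patA ℓ) ?_ ?_
    · intro n hn
      have hcase : n = 0 ∨ (1 ≤ n ∧ n + 3 < ℓ) ∨ n + 3 = ℓ := by omega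
      rcases hcase with rfl | ⟨h1, h2⟩ | h2
      · rw [patA_eval0, patA_eval1 ℓ 1 (by omega) (by omega) (by omega),
          patA_eval2 ℓ 2 (by omega) (by omega) (by omega)]
        exact c5_012
      · have hm : n % 3 = 0 ∨ n % 3 = 1 ∨ n % 3 = 2 := by omega
        rcases hm with hm | hm | hm
        · rw [patA_eval3 ℓ n (by omega) (by omega) hm,
            patA_eval1 ℓ (n+1) (by omega) (by omega) (by omega),
            patA_eval2 ℓ (n+2) (by omega) (by omega) (by omega)]
          exact c5_312
        · rw [patA_eval1 ℓ n (by omega) (by omega) hm,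
            patA_eval2 ℓ (n+1) (by omega) (by omega) (by omega),
            patA_eval3 ℓ (n+2) (by omega) (by omega) (by omega)]
          exact c5_123
        · rw [patA_eval2 ℓ n (by omega) (by omega) hm,
            patA_eval3 ℓ (n+1) (by omega) (by omega) (by omega),
            patA_eval1 ℓ (n+2) (by omega) (by omega) (by omega)]
          exact c5_231
      · rw [patA_eval2 ℓ n (by omega) (by omega) (by omega),
          patA_eval3 ℓ (n+1) (by omega) (by omega) (by omega),
          patA_eval4 ℓ (n+2) (by omega) (by omega)]
        exact c5_234
    · rw [patA_eval3 ℓ (ℓ-2) (by omega) (by omega) (by omega),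
        patA_eval4 ℓ (ℓ-1) (by omega) (by omega), patA_eval0]
      exact c5_340
end

section
/- For every integer ℓ ≥ 5, the blow-up C_ℓ^-[2] contains a copy of C_{ℓ+3}^-. -/
open Finset

/-- The vertex map used for the embedding: `v ↦ (v mod-shift, side)`. -/
def gfun (ℓ : ℕ) (hℓ : 5 ≤ ℓ) : Fin (ℓ + 3) → Fin ℓ × Fin 2 := fun v =>
  (⟨if v.val < 3 then v.val else v.val - 3, by have := v.isLt; split_ifs <;> omega⟩,
   ⟨if 3 ≤ v.val ∧ v.val < 6 then 1 else 0, by split_ifs <;> omega⟩)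

lemma mem_cycM_of (ℓ : ℕ) (s : Fin ℓ) (hs : s.val < ℓ - 1) (e : Finset (Fin ℓ))
    (he : e = {s, rot ℓ s 1, rot ℓ s 2}) : e ∈ cycM ℓ := by
  rw [cycM, he]
  exact mem_image_of_mem _ (mem_filter.mpr ⟨mem_univ s, hs⟩)

lemma mem_blowUp_of {k t : ℕ} {EH : Finset (Finset (Fin k))} {a b c : Fin k × Fin t}
    (h1 : a.1 ≠ b.1) (h2 : a.1 ≠ c.1) (h3 : b.1 ≠ c.1)
    (hE : ({a.1, b.1, c.1} : Finset (Fin k)) ∈ EH) :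
    ({a, b, c} : Finset (Fin k × Fin t)) ∈ blowUp EH t := by
  have hab : a ≠ b := fun h => h1 (congrArg Prod.fst h)
  have hac : a ≠ c := fun h => h2 (congrArg Prod.fst h)
  have hbc : b ≠ c := fun h => h3 (congrArg Prod.fst h)
  have himg : ({a, b, c} : Finset (Fin k × Fin t)).image Prod.fst = {a.1, b.1, c.1} := by
    simp [Finset.image_insert]
  have hcard : ({a, b, c} : Finset (Fin k × Fin t)).card = 3 := by
    rw [card_insert_of_notMem (by simp [hab, hac]), card_insert_of_notMem (by simp [hbc]),
      card_singleton]
  have hcard2 : ({a.1, b.1, c.1} : Finset (Fin k)).card = 3 := by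
    rw [card_insert_of_notMem (by simp [h1, h2]), card_insert_of_notMem (by simp [h3]),
      card_singleton]
  rw [blowUp, mem_filter, mem_powersetCard]
  exact ⟨⟨subset_univ _, hcard⟩, by rw [himg]; exact ⟨hcard2, hE⟩⟩

set_option maxHeartbeats 1000000 in
/-- For every ℓ ≥ 5, the blow-up C_ℓ⁻[2] contains C_{ℓ+3}⁻. -/
theorem Cl_plus_three_in_blowup (ℓ : ℕ) (hℓ : 5 ≤ ℓ) :
    ContainsCopy (cycM (ℓ + 3)) (blowUp (cycM ℓ) 2) := by
  have hinj : Function.Injective (gfun ℓ hℓ) := by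
    intro x y hxy
    have h1 := congrArg (fun p => (Prod.fst p).val) hxy
    have h2 := congrArg (fun p => (Prod.snd p).val) hxy
    simp only [gfun] at h1 h2
    have hx := x.isLt; have hy := y.isLt
    apply Fin.ext
    split_ifs at h1 h2 <;> omega
  refine ⟨⟨gfun ℓ hℓ, hinj⟩, ?_⟩
  intro e he
  rw [cycM, mem_image] at he
  obtain ⟨i, hi, rfl⟩ := he
  rw [mem_filter] at hi
  have hj : i.val < ℓ + 2 := by have := hi.2; omega
  have hr1 : (rot (ℓ+3) i 1).val = i.val + 1 := Nat.mod_eq_of_lt (by omega)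
  rw [Finset.map_insert, Finset.map_insert, Finset.map_singleton]
  simp only [Function.Embedding.coeFn_mk]
  by_cases hw : i.val = ℓ + 1
  · -- wrap-around edge
    have hr2 : (rot (ℓ+3) i 2).val = 0 := by
      show (i.val + 2) % (ℓ+3) = 0
      have h : i.val + 2 = ℓ + 3 := by omega
      rw [h, Nat.mod_self]
    have hA : (gfun ℓ hℓ i).1.val = ℓ - 2 := by
      simp only [gfun]; split_ifs <;> omega
    have hB : (gfun ℓ hℓ (rot (ℓ+3) i 1)).1.val = ℓ - 1 := by
      simp only [gfun, hr1]; split_ifs <;> omega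
    have hC : (gfun ℓ hℓ (rot (ℓ+3) i 2)).1.val = 0 := by
      simp only [gfun, hr2]; split_ifs <;> omega
    refine mem_blowUp_of ?_ ?_ ?_ ?_
    · simp only [Ne, Fin.ext_iff, hA, hB]; omega
    · simp only [Ne, Fin.ext_iff, hA, hC]; omega
    · simp only [Ne, Fin.ext_iff, hB, hC]; omega
    · refine mem_cycM_of ℓ ⟨ℓ - 2, by omega⟩ (by simp; omega) _ ?_
      have hs1 : (rot ℓ (⟨ℓ - 2, by omega⟩ : Fin ℓ) 1).val = ℓ - 1 := by
        show (ℓ - 2 + 1) % ℓ = ℓ - 1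
        have h : ℓ - 2 + 1 = ℓ - 1 := by omega
        rw [h, Nat.mod_eq_of_lt (by omega)]
      have hs2 : (rot ℓ (⟨ℓ - 2, by omega⟩ : Fin ℓ) 2).val = 0 := by
        show (ℓ - 2 + 2) % ℓ = 0
        have h : ℓ - 2 + 2 = ℓ := by omega
        rw [h, Nat.mod_self]
      ext x
      simp only [mem_insert, mem_singleton, Fin.ext_iff, hA, hB, hC, hs1, hs2] <;> omega
  · -- no wrap-around
    have hr2 : (rot (ℓ+3) i 2).val = i.val + 2 := Nat.mod_eq_of_lt (by omega)
    have hA : (gfun ℓ hℓ i).1.val = if i.val < 3 then i.val else i.val - 3 := rfl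
    have hB : (gfun ℓ hℓ (rot (ℓ+3) i 1)).1.val
        = if i.val + 1 < 3 then i.val + 1 else i.val + 1 - 3 := by
      simp only [gfun, hr1]
    have hC : (gfun ℓ hℓ (rot (ℓ+3) i 2)).1.val
        = if i.val + 2 < 3 then i.val + 2 else i.val + 2 - 3 := by
      simp only [gfun, hr2]
    refine mem_blowUp_of ?_ ?_ ?_ ?_
    · simp only [Ne, Fin.ext_iff, hA, hB]; split_ifs <;> omega
    · simp only [Ne, Fin.ext_iff, hA, hC]; split_ifs <;> omega
    · simp only [Ne, Fin.ext_iff, hB, hC]; split_ifs <;> omega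
    · by_cases h4 : i.val < 4
      · refine mem_cycM_of ℓ ⟨0, by omega⟩ (by show (0:ℕ) < ℓ - 1; omega) _ ?_
        have hs1 : (rot ℓ (⟨0, by omega⟩ : Fin ℓ) 1).val = 1 := by
          show (0 + 1) % ℓ = 1
          rw [Nat.mod_eq_of_lt (by omega)]
        have hs2 : (rot ℓ (⟨0, by omega⟩ : Fin ℓ) 2).val = 2 := by
          show (0 + 2) % ℓ = 2
          rw [Nat.mod_eq_of_lt (by omega)]
        ext x
        simp only [mem_insert, mem_singleton, Fin.ext_iff, hA, hB, hC, hs1, hs2] <;>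
          split_ifs <;> omega
      · refine mem_cycM_of ℓ ⟨i.val - 3, by omega⟩ (by show i.val - 3 < ℓ - 1; omega) _ ?_
        have hs1 : (rot ℓ (⟨i.val - 3, by omega⟩ : Fin ℓ) 1).val = i.val - 2 := by
          show (i.val - 3 + 1) % ℓ = i.val - 2
          have h : i.val - 3 + 1 = i.val - 2 := by omega
          rw [h, Nat.mod_eq_of_lt (by omega)]
        have hs2 : (rot ℓ (⟨i.val - 3, by omega⟩ : Fin ℓ) 2).val = i.val - 1 := by
          show (i.val - 3 + 2) % ℓ = i.val - 1
          have h : i.val - 3 + 2 = i.val - 1 := by omega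
          rw [h, Nat.mod_eq_of_lt (by omega)]
        ext x
        simp only [mem_insert, mem_singleton, Fin.ext_iff, hA, hB, hC, hs1, hs2] <;>
          split_ifs <;> omega
end

section
/- For every n ≥ 0 and every integer ℓ ≥ 4 not divisible by 3, the iterated balanced blow-up of an edge H_n contains no copy of C_ℓ^-. -/
open Finset

/-- `HEdge n a b c` holds iff `{a,b,c}` (with `a < b < c < n`) is an edge of the
iterated balanced blow-up of an edge `H_n`, whose three parts are the intervals
`[0, n/3)`, `[n/3, n/3 + (n+1)/3)` and `[n/3 + (n+1)/3, n)`. -/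
def HEdge (n a b c : ℕ) : Prop :=
  if h : a < b ∧ b < c ∧ c < n then
    (a < n / 3 ∧ n / 3 ≤ b ∧ b < n / 3 + (n + 1) / 3 ∧ n / 3 + (n + 1) / 3 ≤ c) ∨
    (c < n / 3 ∧ HEdge (n / 3) a b c) ∨
    (n / 3 ≤ a ∧ c < n / 3 + (n + 1) / 3 ∧
      HEdge ((n + 1) / 3) (a - n / 3) (b - n / 3) (c - n / 3)) ∨
    (n / 3 + (n + 1) / 3 ≤ a ∧
      HEdge ((n + 2) / 3) (a - (n / 3 + (n + 1) / 3)) (b - (n / 3 + (n + 1) / 3))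
        (c - (n / 3 + (n + 1) / 3)))
  else False
termination_by n
decreasing_by all_goals omega

open scoped Classical in
/-- The iterated balanced blow-up of an edge on `n` vertices. -/
noncomputable def Hgraph (n : ℕ) : Finset (Finset (Fin n)) :=
  (Finset.univ : Finset (Finset (Fin n))).filter
    (fun e => ∃ a b c : Fin n, e = {a, b, c} ∧ HEdge n a.val b.val c.val)

/- ===== auxiliary development ===== -/

/-- The part (0, 1 or 2) of the balanced partition of `[0,n)` containing `v`. -/
def partn (n v : ℕ) : ℕ :=
  if v < n / 3 then 0 else if v < n / 3 + (n + 1) / 3 then 1 else 2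

/-- The offset (first element) of part `t`. -/
def offn (n t : ℕ) : ℕ :=
  if t = 0 then 0 else if t = 1 then n / 3 else n / 3 + (n + 1) / 3

/-- The size of part `t`. -/
def szn (n t : ℕ) : ℕ :=
  if t = 0 then n / 3 else if t = 1 then (n + 1) / 3 else (n + 2) / 3

lemma partn_lt3 (n v : ℕ) : partn n v < 3 := by unfold partn; split_ifs <;> omega

lemma partn0 (n v : ℕ) : partn n v = 0 ↔ v < n / 3 := by
  unfold partn; split_ifs <;> (try simp) <;> omega

lemma partn1 (n v : ℕ) : partn n v = 1 ↔ n / 3 ≤ v ∧ v < n / 3 + (n + 1) / 3 := by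
  unfold partn; split_ifs <;> (try simp) <;> omega

lemma partn2 (n v : ℕ) : partn n v = 2 ↔ n / 3 + (n + 1) / 3 ≤ v := by
  unfold partn; split_ifs <;> (try simp) <;> omega

lemma partn_off (n v t : ℕ) (h : partn n v = t) : offn n t ≤ v := by
  unfold partn at h; unfold offn; split_ifs at h ⊢ <;> omega

lemma HEdge_elim {n a b c : ℕ} (h : HEdge n a b c) :
    a < b ∧ b < c ∧ c < n ∧
    ((partn n a = 0 ∧ partn n b = 1 ∧ partn n c = 2) ∨
     ∃ t, t < 3 ∧ partn n a = t ∧ partn n b = t ∧ partn n c = t ∧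
       HEdge (szn n t) (a - offn n t) (b - offn n t) (c - offn n t)) := by
  rw [HEdge] at h
  split at h
  · rename_i hlt
    obtain ⟨h1, h2, h3⟩ := hlt
    refine ⟨h1, h2, h3, ?_⟩
    rcases h with h | ⟨hc, h⟩ | ⟨ha, hc, h⟩ | ⟨ha, h⟩
    · exact Or.inl ⟨(partn0 n a).mpr (by omega), (partn1 n b).mpr (by omega),
        (partn2 n c).mpr (by omega)⟩
    · refine Or.inr ⟨0, by omega, (partn0 n a).mpr (by omega), (partn0 n b).mpr (by omega),
        (partn0 n c).mpr (by omega), ?_⟩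
      simpa [szn, offn] using h
    · refine Or.inr ⟨1, by omega, (partn1 n a).mpr (by omega), (partn1 n b).mpr (by omega),
        (partn1 n c).mpr (by omega), ?_⟩
      simpa [szn, offn] using h
    · refine Or.inr ⟨2, by omega, (partn2 n a).mpr (by omega), (partn2 n b).mpr (by omega),
        (partn2 n c).mpr (by omega), ?_⟩
      simpa [szn, offn] using h
  · exact h.elim

/-- Symmetrized edge relation: `{x,y,z}` is an edge of `H_n` in some order. -/
def SE (n x y z : ℕ) : Prop :=
  HEdge n x y z ∨ HEdge n x z y ∨ HEdge n y x z ∨ HEdge n y z x ∨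
  HEdge n z x y ∨ HEdge n z y x

lemma SE_of_mem {n x y z a b c : ℕ} (hxy : x ≠ y) (hxz : x ≠ z) (hyz : y ≠ z)
    (hx : x = a ∨ x = b ∨ x = c) (hy : y = a ∨ y = b ∨ y = c)
    (hz : z = a ∨ z = b ∨ z = c) (h : HEdge n a b c) : SE n x y z := by
  unfold SE
  rcases hx with rfl | rfl | rfl <;> rcases hy with rfl | rfl | rfl <;>
    rcases hz with rfl | rfl | rfl <;> tauto

lemma SE_elim {n x y z : ℕ} (h : SE n x y z) :
    (x ≠ y ∧ x ≠ z ∧ y ≠ z) ∧ (x < n ∧ y < n ∧ z < n) ∧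
    ((partn n x ≠ partn n y ∧ partn n x ≠ partn n z ∧ partn n y ≠ partn n z) ∨
     ∃ t, t < 3 ∧ partn n x = t ∧ partn n y = t ∧ partn n z = t ∧
       SE (szn n t) (x - offn n t) (y - offn n t) (z - offn n t)) := by
  unfold SE at h
  rcases h with h | h | h | h | h | h <;>
    obtain ⟨h1, h2, h3, h4⟩ := HEdge_elim h <;>
    refine ⟨⟨by omega, by omega, by omega⟩, ⟨by omega, by omega, by omega⟩, ?_⟩ <;>
    (rcases h4 with ⟨p1, p2, p3⟩ | ⟨t, ht, p1, p2, p3, hr⟩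
     · exact Or.inl ⟨by omega, by omega, by omega⟩
     · exact Or.inr ⟨t, ht, by omega, by omega, by omega, by unfold SE; tauto⟩)

/-- The embedded cycle, as a function on `ℕ` (periodic mod `ℓ`). -/
def Gfun (ℓ : ℕ) (h : 0 < ℓ) (g : Fin ℓ → ℕ) (k : ℕ) : ℕ := g ⟨k % ℓ, Nat.mod_lt _ h⟩

lemma Gfun_rot (ℓ : ℕ) (h : 0 < ℓ) (g : Fin ℓ → ℕ) (i : Fin ℓ) (k : ℕ) :
    Gfun ℓ h g (i.val + k) = g (rot ℓ i k) := rfl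

lemma Gfun_eq (ℓ : ℕ) (h : 0 < ℓ) (g : Fin ℓ → ℕ) (j : Fin ℓ) :
    Gfun ℓ h g j.val = g j := congrArg g (Fin.ext (Nat.mod_eq_of_lt j.isLt))

lemma Gfun_loop (ℓ : ℕ) (h : 0 < ℓ) (g : Fin ℓ → ℕ) :
    Gfun ℓ h g ℓ = Gfun ℓ h g 0 := congrArg g (Fin.ext (by simp))

lemma aux (ℓ : ℕ) (hℓ : 4 ≤ ℓ) (h3 : ¬ 3 ∣ ℓ) :
    ∀ n (g : Fin ℓ → ℕ), Function.Injective g →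
      (∀ i : Fin ℓ, i.val < ℓ - 1 → SE n (g i) (g (rot ℓ i 1)) (g (rot ℓ i 2))) → False := by
  intro n
  induction n using Nat.strong_induction_on with
  | _ n IH =>
    intro g hinj hSE
    have hℓ0 : 0 < ℓ := by omega
    set G : ℕ → ℕ := Gfun ℓ hℓ0 g with hGdef
    have hG : ∀ i, i < ℓ - 1 → SE n (G i) (G (i + 1)) (G (i + 2)) := by
      intro i hi
      have h := hSE ⟨i, by omega⟩ hi
      have e0 : G i = g ⟨i, by omega⟩ := Gfun_eq ℓ hℓ0 g ⟨i, by omega⟩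
      have e1 : G (i + 1) = g (rot ℓ ⟨i, by omega⟩ 1) := Gfun_rot ℓ hℓ0 g ⟨i, by omega⟩ 1
      have e2 : G (i + 2) = g (rot ℓ ⟨i, by omega⟩ 2) := Gfun_rot ℓ hℓ0 g ⟨i, by omega⟩ 2
      rw [e0, e1, e2]; exact h
    have h0 := SE_elim (hG 0 (by omega))
    have step : ∀ i, i < ℓ - 1 →
        ((partn n (G i) ≠ partn n (G (i + 1)) ∧ partn n (G i) ≠ partn n (G (i + 2)) ∧
          partn n (G (i + 1)) ≠ partn n (G (i + 2))) ∨
         (partn n (G i) = partn n (G (i + 1)) ∧ partn n (G (i + 1)) = partn n (G (i + 2)))) := by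
      intro i hi
      have h := SE_elim (hG i hi)
      rcases h.2.2 with hr | ⟨t, _, r0, r1, r2, _⟩
      · exact Or.inl hr
      · exact Or.inr ⟨r0.trans r1.symm, r1.trans r2.symm⟩
    rcases h0.2.2 with hr0 | ⟨t, ht3, q0, q1, q2, -⟩
    · -- all edges are rainbow
      have rainAll : ∀ i, i < ℓ - 1 →
          (partn n (G i) ≠ partn n (G (i + 1)) ∧ partn n (G i) ≠ partn n (G (i + 2)) ∧
           partn n (G (i + 1)) ≠ partn n (G (i + 2))) := by
        intro i
        induction i with
        | zero => intro _; exact hr0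
        | succ j ihj =>
          intro hj
          have Rj := ihj (by omega)
          rcases step (j + 1) hj with h' | h'
          · exact h'
          · rw [show j + 1 + 1 = j + 2 from by omega] at h'
            exact absurd h'.1 Rj.2.2
      have pLt : ∀ k, partn n (G k) < 3 := fun k => partn_lt3 n (G k)
      have step3 : ∀ i, i + 2 < ℓ - 1 → partn n (G (i + 3)) = partn n (G i) := by
        intro i hi
        have R1 := rainAll i (by omega)
        have R2 := rainAll (i + 1) (by omega)
        rw [show i + 1 + 1 = i + 2 from by omega, show i + 1 + 2 = i + 3 from by omega] at R2
        have a1 := pLt i; have a2 := pLt (i + 1); have a3 := pLt (i + 2); have a4 := pLt (i + 3)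
        omega
      have per3 : ∀ k, k < ℓ → partn n (G k) = partn n (G (k % 3)) := by
        intro k
        induction k using Nat.strong_induction_on with
        | _ k IHk =>
          intro hk
          by_cases h : k < 3
          · rw [Nat.mod_eq_of_lt h]
          · have h1 := step3 (k - 3) (by omega)
            rw [show k - 3 + 3 = k from by omega] at h1
            have h2 := IHk (k - 3) (by omega) (by omega)
            rw [h1, h2, show (k - 3) % 3 = k % 3 from by omega]
      have Rlast := rainAll (ℓ - 2) (by omega)
      rw [show ℓ - 2 + 1 = ℓ - 1 from by omega, show ℓ - 2 + 2 = ℓ from by omega] at Rlast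
      have hGl : G ℓ = G 0 := Gfun_loop ℓ hℓ0 g
      rw [hGl] at Rlast
      have e1 := per3 (ℓ - 1) (by omega)
      have e2 := per3 (ℓ - 2) (by omega)
      have hm : ℓ % 3 = 1 ∨ ℓ % 3 = 2 := by omega
      rcases hm with hm | hm
      · rw [show (ℓ - 1) % 3 = 0 from by omega] at e1
        exact Rlast.2.2 e1
      · rw [show (ℓ - 2) % 3 = 0 from by omega] at e2
        exact Rlast.2.1 e2
    · -- all edges lie in part t
      have monoAll : ∀ i, i < ℓ - 1 →
          (partn n (G i) = t ∧ partn n (G (i + 1)) = t ∧ partn n (G (i + 2)) = t) := by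
        intro i
        induction i with
        | zero => intro _; exact ⟨q0, q1, q2⟩
        | succ j ihj =>
          intro hj
          have Mj := ihj (by omega)
          rcases step (j + 1) hj with h' | h'
          · rw [show j + 1 + 1 = j + 2 from by omega] at h'
            exact absurd (Mj.2.1.trans Mj.2.2.symm) h'.1
          · rw [show j + 1 + 1 = j + 2 from by omega,
                show j + 1 + 2 = j + 3 from by omega] at h' ⊢
            exact ⟨Mj.2.1, Mj.2.2, h'.2.symm.trans Mj.2.2⟩
      have allT : ∀ j : Fin ℓ, partn n (g j) = t := by
        intro j
        have hj := j.isLt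
        have hgG : G j.val = g j := Gfun_eq ℓ hℓ0 g j
        rw [← hgG]
        by_cases h : j.val < ℓ - 1
        · exact (monoAll j.val h).1
        · have hj1 : j.val = ℓ - 1 := by omega
          have h2 := (monoAll (ℓ - 3) (by omega)).2.2
          rw [show ℓ - 3 + 2 = ℓ - 1 from by omega] at h2
          rw [hj1]; exact h2
      have hoffg : ∀ j : Fin ℓ, offn n t ≤ g j := fun j => partn_off n (g j) t (allT j)
      have hn3 : 3 ≤ n := by
        obtain ⟨⟨d1, d2, d3⟩, ⟨b1, b2, b3⟩, -⟩ := h0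
        omega
      have hmlt : szn n t < n := by unfold szn; split_ifs <;> omega
      refine IH (szn n t) hmlt (fun j => g j - offn n t) ?_ ?_
      · intro a b hab
        have ha := hoffg a
        have hb := hoffg b
        simp only at hab
        exact hinj (by omega)
      · intro i hi
        have h := SE_elim (hSE i hi)
        rcases h.2.2 with hr | ⟨t', ht', r0, r1, r2, hse⟩
        · exact absurd ((allT i).trans (allT (rot ℓ i 1)).symm) hr.1
        · have htt : t' = t := r0.symm.trans (allT i)
          subst htt
          exact hse

/-- For ℓ ≥ 4 not divisible by 3, the iterated balanced blow-up of an edge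
contains no copy of C_ℓ⁻. -/
theorem Hgraph_Cl_free (n ℓ : ℕ) (hℓ : 4 ≤ ℓ) (h3 : ¬ 3 ∣ ℓ) :
    ¬ ContainsCopy (cycM ℓ) (Hgraph n) := by
  rintro ⟨f, hf⟩
  have hℓ0 : 0 < ℓ := by omega
  refine aux ℓ hℓ h3 n (fun i => (f i).val) ?_ ?_
  · intro a b hab
    exact f.injective (Fin.ext hab)
  · intro i hi
    have hedge : ({i, rot ℓ i 1, rot ℓ i 2} : Finset (Fin ℓ)) ∈ cycM ℓ := by
      unfold cycM
      exact mem_image.mpr ⟨i, mem_filter.mpr ⟨mem_univ i, hi⟩, rfl⟩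
    have hmap := hf _ hedge
    rw [Finset.map_insert, Finset.map_insert, Finset.map_singleton] at hmap
    classical
    unfold Hgraph at hmap
    obtain ⟨-, a, b, c, heq, hE⟩ := Finset.mem_filter.mp hmap
    have hv : ∀ k, k ≤ 2 → (i.val + k < ℓ ∧ (i.val + k) % ℓ = i.val + k) ∨
        (ℓ ≤ i.val + k ∧ (i.val + k) % ℓ = i.val + k - ℓ) := by
      intro k hk
      have hik := i.isLt
      rcases Nat.lt_or_ge (i.val + k) ℓ with h | h
      · exact Or.inl ⟨h, Nat.mod_eq_of_lt h⟩
      · refine Or.inr ⟨h, ?_⟩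
        rw [Nat.mod_eq_sub_mod h, Nat.mod_eq_of_lt (by omega)]
    have hik := i.isLt
    have hv1 := hv 1 (by omega)
    have hv2 := hv 2 (by omega)
    have d01 : i ≠ rot ℓ i 1 := by
      intro h
      have h2 : i.val = (i.val + 1) % ℓ := congrArg Fin.val h
      rcases hv1 with ⟨e1, e2⟩ | ⟨e1, e2⟩ <;> rw [e2] at h2 <;> omega
    have d02 : i ≠ rot ℓ i 2 := by
      intro h
      have h2 : i.val = (i.val + 2) % ℓ := congrArg Fin.val h
      rcases hv2 with ⟨e1, e2⟩ | ⟨e1, e2⟩ <;> rw [e2] at h2 <;> omega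
    have d12 : rot ℓ i 1 ≠ rot ℓ i 2 := by
      intro h
      have h2 : (i.val + 1) % ℓ = (i.val + 2) % ℓ := congrArg Fin.val h
      rcases hv1 with ⟨e1, e2⟩ | ⟨e1, e2⟩ <;> rcases hv2 with ⟨e3, e4⟩ | ⟨e3, e4⟩ <;>
        rw [e2, e4] at h2 <;> omega
    have hxa : f i = a ∨ f i = b ∨ f i = c := by
      have h' : f i ∈ ({a, b, c} : Finset (Fin n)) := heq ▸ (by simp)
      simpa using h'
    have hyb : f (rot ℓ i 1) = a ∨ f (rot ℓ i 1) = b ∨ f (rot ℓ i 1) = c := by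
      have h' : f (rot ℓ i 1) ∈ ({a, b, c} : Finset (Fin n)) := heq ▸ (by simp)
      simpa using h'
    have hzc : f (rot ℓ i 2) = a ∨ f (rot ℓ i 2) = b ∨ f (rot ℓ i 2) = c := by
      have h' : f (rot ℓ i 2) ∈ ({a, b, c} : Finset (Fin n)) := heq ▸ (by simp)
      simpa using h'
    refine SE_of_mem ?_ ?_ ?_ ?_ ?_ ?_ hE
    · exact fun h => d01 (f.injective (Fin.ext h))
    · exact fun h => d02 (f.injective (Fin.ext h))
    · exact fun h => d12 (f.injective (Fin.ext h))
    · rcases hxa with rfl | rfl | rfl <;> simp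
    · rcases hyb with rfl | rfl | rfl <;> simp
    · rcases hzc with rfl | rfl | rfl <;> simp
end

section
/- Define f : ℕ → ℕ by f(0) = f(1) = f(2) = 0 and, for n ≥ 3, f(n) = ⌊n/3⌋·⌊(n+1)/3⌋·⌊(n+2)/3⌋ + f(⌊n/3⌋) + f(⌊(n+1)/3⌋) + f(⌊(n+2)/3⌋) (so f(n) is the number of edges of the iterated balanced blow-up of an edge H_n). Then there exists a constant C > 0 such that for all n ≥ 1, |f(n) − n³/24| ≤ (1/6)·n·(log n)/(log 3) + C·n. -/
/-- The number of edges of the iterated balanced blow-up of an edge on `n` vertices: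
`f(n) = ⌊n/3⌋·⌊(n+1)/3⌋·⌊(n+2)/3⌋ + f(⌊n/3⌋) + f(⌊(n+1)/3⌋) + f(⌊(n+2)/3⌋)` for `n ≥ 3`,
with `f(0) = f(1) = f(2) = 0`. -/
def fH (n : ℕ) : ℕ :=
  if _h : n < 3 then 0
  else n / 3 * ((n + 1) / 3) * ((n + 2) / 3) + fH (n / 3) + fH ((n + 1) / 3) + fH ((n + 2) / 3)
termination_by n
decreasing_by all_goals omega

/-- `|f(n) − n³/24| ≤ (1/6)·n·log n/log 3 + C·n`. -/
theorem edge_count_Hn_asymptotics :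
    ∃ C : ℝ, 0 < C ∧ ∀ n : ℕ, 1 ≤ n →
      |(fH n : ℝ) - (n : ℝ) ^ 3 / 24| ≤
        (1/6) * (n : ℝ) * Real.log n / Real.log 3 + C * n := by
  refine ⟨1, one_pos, ?_⟩
  intro n
  induction n using Nat.strong_induction_on with
  | _ n ih =>
    intro hn
    have hL : (0:ℝ) < Real.log 3 := Real.log_pos (by norm_num)
    have hn1 : (1:ℝ) ≤ (n:ℝ) := by exact_mod_cast hn
    have hlogN : (0:ℝ) ≤ Real.log n := Real.log_nonneg hn1
    have hRHS : (0:ℝ) ≤ 1/6 * (n:ℝ) * Real.log n / Real.log 3 := by positivity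
    by_cases h5 : n < 5
    · -- base cases n = 1, 2, 3, 4
      have hf1 : fH 1 = 0 := by rw [fH]; norm_num
      have hf2 : fH 2 = 0 := by rw [fH]; norm_num
      have hf3 : fH 3 = 1 := by rw [fH]; norm_num [hf1]
      have hf4 : fH 4 = 2 := by rw [fH]; norm_num [hf1, hf2]
      have hsmall : |(fH n : ℝ) - (n:ℝ)^3/24| ≤ (n:ℝ) := by
        interval_cases n <;>
          simp only [hf1, hf2, hf3, hf4] <;> rw [abs_le] <;> norm_num
      linarith
    · push_neg at h5
      set a := n / 3 with hadef
      set b := (n+1) / 3 with hbdef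
      set c := (n+2) / 3 with hcdef
      have habc : a + b + c = n := by omega
      have ha1 : 1 ≤ a := by omega
      have hb1 : 1 ≤ b := by omega
      have hc1 : 1 ≤ c := by omega
      have ha3 : 3 * a ≤ n + 2 := by omega
      have hb3 : 3 * b ≤ n + 2 := by omega
      have hc3 : 3 * c ≤ n + 2 := by omega
      have han : a < n := by omega
      have hbn : b < n := by omega
      have hcn : c < n := by omega
      have hfn : fH n = a * b * c + fH a + fH b + fH c := by
        rw [fH]; rw [dif_neg (by omega)]
      have Ia := ih a han ha1
      have Ib := ih b hbn hb1
      have Ic := ih c hcn hc1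
      have hsumR : (a:ℝ) + (b:ℝ) + (c:ℝ) = (n:ℝ) := by exact_mod_cast habc
      have haR : (1:ℝ) ≤ (a:ℝ) := by exact_mod_cast ha1
      -- bound on the local error term
      have hE : |(a:ℝ)*(b:ℝ)*(c:ℝ) + ((a:ℝ)^3 + (b:ℝ)^3 + (c:ℝ)^3 - (n:ℝ)^3)/24|
          ≤ (n:ℝ)/9 := by
        have hm : n % 3 = 0 ∨ n % 3 = 1 ∨ n % 3 = 2 := by omega
        rcases hm with h | h | h
        · have hb' : b = a := by omega
          have hc' : c = a := by omega
          have hn' : n = 3 * a := by omega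
          have hbR : (b:ℝ) = a := by exact_mod_cast hb'
          have hcR : (c:ℝ) = a := by exact_mod_cast hc'
          have hnR : (n:ℝ) = 3 * a := by exact_mod_cast hn'
          have heq : (a:ℝ)*(b:ℝ)*(c:ℝ) + ((a:ℝ)^3 + (b:ℝ)^3 + (c:ℝ)^3 - (n:ℝ)^3)/24
              = 0 := by rw [hbR, hcR, hnR]; ring
          rw [heq, abs_zero]
          positivity
        · have hb' : b = a := by omega
          have hc' : c = a + 1 := by omega
          have hn' : n = 3 * a + 1 := by omega
          have hbR : (b:ℝ) = a := by exact_mod_cast hb'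
          have hcR : (c:ℝ) = a + 1 := by exact_mod_cast hc'
          have hnR : (n:ℝ) = 3 * a + 1 := by exact_mod_cast hn'
          have heq : (a:ℝ)*(b:ℝ)*(c:ℝ) + ((a:ℝ)^3 + (b:ℝ)^3 + (c:ℝ)^3 - (n:ℝ)^3)/24
              = -((a:ℝ)/4) := by rw [hbR, hcR, hnR]; ring
          rw [heq, abs_neg, abs_of_nonneg (by positivity), hnR]
          linarith
        · have hb' : b = a + 1 := by omega
          have hc' : c = a + 1 := by omega
          have hn' : n = 3 * a + 2 := by omega
          have hbR : (b:ℝ) = a + 1 := by exact_mod_cast hb'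
          have hcR : (c:ℝ) = a + 1 := by exact_mod_cast hc'
          have hnR : (n:ℝ) = 3 * a + 2 := by exact_mod_cast hn'
          have heq : (a:ℝ)*(b:ℝ)*(c:ℝ) + ((a:ℝ)^3 + (b:ℝ)^3 + (c:ℝ)^3 - (n:ℝ)^3)/24
              = -(((a:ℝ) + 1)/4) := by rw [hbR, hcR, hnR]; ring
          rw [heq, abs_neg, abs_of_nonneg (by positivity), hnR]
          linarith
      -- logarithm bound for each part
      have hcube : ((n:ℝ) + 2)^3 ≤ 3 * (n:ℝ)^3 := by
        have h5R : (5:ℝ) ≤ (n:ℝ) := by exact_mod_cast h5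
        nlinarith [sq_nonneg ((n:ℝ) - 5),
          mul_nonneg (mul_nonneg (sub_nonneg.2 h5R) (sub_nonneg.2 h5R)) (sub_nonneg.2 h5R)]
      have hlogbound : ∀ x : ℕ, 1 ≤ x → 3 * x ≤ n + 2 →
          Real.log x ≤ Real.log n - 2/3 * Real.log 3 := by
        intro x hx hxn
        have hx0 : (0:ℝ) < (x:ℝ) := by exact_mod_cast hx
        have hxle : (x:ℝ) ≤ ((n:ℝ) + 2) / 3 := by
          have : (3:ℝ) * (x:ℝ) ≤ (n:ℝ) + 2 := by exact_mod_cast hxn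
          linarith
        have h1 : Real.log x ≤ Real.log (((n:ℝ) + 2) / 3) :=
          Real.log_le_log hx0 hxle
        have h2 : Real.log (((n:ℝ) + 2) / 3) = Real.log ((n:ℝ) + 2) - Real.log 3 := by
          rw [Real.log_div (by positivity) (by norm_num)]
        have h3 : 3 * Real.log ((n:ℝ) + 2) ≤ Real.log 3 + 3 * Real.log n := by
          have hle := Real.log_le_log (by positivity : (0:ℝ) < ((n:ℝ) + 2)^3) hcube
          rw [Real.log_pow] at hle
          rw [Real.log_mul (by norm_num) (by positivity), Real.log_pow] at hle
          push_cast at hle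
          linarith
        linarith
      -- per-part estimate
      have hpart : ∀ x : ℕ, 1 ≤ x → 3 * x ≤ n + 2 →
          1/6 * (x:ℝ) * Real.log x / Real.log 3 ≤
            1/6 * (x:ℝ) * Real.log n / Real.log 3 - (x:ℝ)/9 := by
        intro x hx hxn
        have hx0 : (0:ℝ) ≤ (x:ℝ) := by positivity
        have hlx := hlogbound x hx hxn
        have h1 : (x:ℝ) * Real.log x ≤ (x:ℝ) * (Real.log n - 2/3 * Real.log 3) :=
          mul_le_mul_of_nonneg_left hlx hx0
        have h2 : 1/6 * ((x:ℝ) * Real.log x) / Real.log 3 ≤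
            1/6 * ((x:ℝ) * (Real.log n - 2/3 * Real.log 3)) / Real.log 3 := by
          gcongr
        have h3 : 1/6 * ((x:ℝ) * (Real.log n - 2/3 * Real.log 3)) / Real.log 3 =
            1/6 * (x:ℝ) * Real.log n / Real.log 3 - (x:ℝ)/9 := by
          field_simp
          ring
        calc 1/6 * (x:ℝ) * Real.log x / Real.log 3
            = 1/6 * ((x:ℝ) * Real.log x) / Real.log 3 := by ring
          _ ≤ _ := h2
          _ = _ := h3
      have hpa := hpart a ha1 ha3
      have hpb := hpart b hb1 hb3
      have hpc := hpart c hc1 hc3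
      -- decomposition of the error
      have hdecomp : (fH n : ℝ) - (n:ℝ)^3/24 =
          ((a:ℝ)*(b:ℝ)*(c:ℝ) + ((a:ℝ)^3 + (b:ℝ)^3 + (c:ℝ)^3 - (n:ℝ)^3)/24)
          + ((fH a : ℝ) - (a:ℝ)^3/24) + ((fH b : ℝ) - (b:ℝ)^3/24)
          + ((fH c : ℝ) - (c:ℝ)^3/24) := by
        rw [hfn]; push_cast; ring
      have habs : |(fH n : ℝ) - (n:ℝ)^3/24| ≤
          |(a:ℝ)*(b:ℝ)*(c:ℝ) + ((a:ℝ)^3 + (b:ℝ)^3 + (c:ℝ)^3 - (n:ℝ)^3)/24|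
          + |(fH a : ℝ) - (a:ℝ)^3/24| + |(fH b : ℝ) - (b:ℝ)^3/24|
          + |(fH c : ℝ) - (c:ℝ)^3/24| := by
        rw [hdecomp]
        calc |_ + _ + _ + ((fH c : ℝ) - (c:ℝ)^3/24)|
            ≤ |_ + _ + ((fH b : ℝ) - (b:ℝ)^3/24)| + |(fH c : ℝ) - (c:ℝ)^3/24| :=
              abs_add_le _ _
          _ ≤ (|_ + ((fH a : ℝ) - (a:ℝ)^3/24)| + |(fH b : ℝ) - (b:ℝ)^3/24|)
              + |(fH c : ℝ) - (c:ℝ)^3/24| := by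
              gcongr
              exact abs_add_le _ _
          _ ≤ _ := by
              gcongr
              exact abs_add_le _ _
      have hsumlog : 1/6 * (a:ℝ) * Real.log n / Real.log 3
          + 1/6 * (b:ℝ) * Real.log n / Real.log 3
          + 1/6 * (c:ℝ) * Real.log n / Real.log 3
          = 1/6 * (n:ℝ) * Real.log n / Real.log 3 := by
        rw [← hsumR]; ring
      linarith [habs, hE, Ia, Ib, Ic, hpa, hpb, hpc]
end
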